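/- Let A = k[x]/(x^{n+1}) be the truncated polynomial algebra over a field k. For each fixed m with 0 ≤ m ≤ n, the linear map Δ_m : A → A ⊗ A defined on the basis by Δ_m(x^l) = Σ_{i+j = n+m+l, 0 ≤ i,j ≤ n} x^i ⊗ x^j is a coassociative A-bimodule map, hence a nearly Frobenius coproduct on A. -/
import Mathlib


open TensorProduct

/-- The truncated polynomial algebra `k[x]/(x^(n+1))`. -/
abbrev TruncPoly (k : Type*) [Field k] (n : ℕ) : Type _ :=
  AdjoinRoot ((Polynomial.X : Polynomial k) ^ (n + 1))

set_option maxHeartbeats 1000000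
set_option synthInstance.maxHeartbeats 400000

open Polynomial

lemma sum_ite_collapse {n : ℕ} {M : Type*} [AddCommMonoid M] (f : ℕ → M) (a c : ℕ) (hac : a ≤ c) :
    ∑ j ∈ Finset.range (n+1), (if a + j = c then f j else 0)
      = if c ≤ n + a then f (c - a) else 0 := by
  have hcond : ∀ j, (a + j = c) = (j = c - a) := fun j => propext (by omega)
  simp_rw [hcond]
  rw [Finset.sum_ite_eq' (Finset.range (n+1)) (c-a) f]
  by_cases hc : c ≤ n + a
  · rw [if_pos (by rw [Finset.mem_range]; omega), if_pos hc]
  · rw [if_neg (by rw [Finset.mem_range]; omega), if_neg hc]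

lemma shift_sum {n : ℕ} {M : Type*} [AddCommMonoid M] (h : ℕ → M) (l : ℕ)
    (h0 : ∀ i, n < i → h i = 0) (h1 : ∀ i < l, h i = 0) :
    ∑ i ∈ Finset.range (n+1), h (l+i) = ∑ i ∈ Finset.range (n+1), h i := by
  have e1 : ∑ i ∈ Finset.range (n+1), h (l+i) = ∑ i ∈ Finset.Ico l (l+(n+1)), h i := by
    rw [Finset.sum_Ico_eq_sum_range]
    simp
  have e2 : ∑ i ∈ Finset.Ico l (l+(n+1)), h i = ∑ i ∈ Finset.range (l+(n+1)), h i := by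
    apply Finset.sum_subset
    · intro i hi; rw [Finset.mem_Ico] at hi; rw [Finset.mem_range]; omega
    · intro i hi hni
      rw [Finset.mem_range] at hi; rw [Finset.mem_Ico] at hni
      exact h1 i (by omega)
  have e3 : ∑ i ∈ Finset.range (n+1), h i = ∑ i ∈ Finset.range (l+(n+1)), h i := by
    apply Finset.sum_subset
    · intro i hi; rw [Finset.mem_range] at *; omega
    · intro i hi hni
      rw [Finset.mem_range] at hi hni
      exact h0 i (by omega)
  rw [e1, e2, e3]

section
variable (k : Type*) [Field k] (n m : ℕ)

noncomputable def nfX : TruncPoly k n := AdjoinRoot.root _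

lemma nfX_pow_zero {r : ℕ} (h : n < r) : (nfX k n) ^ r = 0 := by
  have h1 : (nfX k n) ^ (n+1) = 0 := by
    unfold nfX
    rw [← AdjoinRoot.mk_X, ← map_pow, AdjoinRoot.mk_self]
  calc (nfX k n) ^ r = (nfX k n)^(n+1) * (nfX k n)^(r - (n+1)) := by
        rw [← pow_add]; congr 1; omega
    _ = 0 := by rw [h1, zero_mul]

/-- the sum `D c = Σ_{i+j=c, 0≤i,j≤n} x^i ⊗ x^j`. -/
noncomputable def nfD (c : ℕ) : TruncPoly k n ⊗[k] TruncPoly k n :=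
  ∑ i ∈ Finset.range (n + 1), ∑ j ∈ Finset.range (n + 1),
    if i + j = c then ((nfX k n) ^ i) ⊗ₜ[k] ((nfX k n) ^ j) else 0

lemma nfD_eq_zero {c : ℕ} (h : 2*n < c) : nfD k n c = 0 := by
  unfold nfD
  refine Finset.sum_eq_zero fun i hi => Finset.sum_eq_zero fun j hj => ?_
  simp only [Finset.mem_range] at hi hj
  rw [if_neg (by omega)]

lemma nfD_lmul (c l : ℕ) (hc : n ≤ c) :
    ((nfX k n ^ l) ⊗ₜ[k] (1 : TruncPoly k n)) * nfD k n c = nfD k n (c + l) := by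
  classical
  have lhs_eq : ((nfX k n ^ l) ⊗ₜ[k] (1 : TruncPoly k n)) * nfD k n c
      = ∑ i ∈ Finset.range (n+1), ∑ j ∈ Finset.range (n+1),
          (if i + j = c then (nfX k n ^ (l+i)) ⊗ₜ[k] (nfX k n ^ j) else 0) := by
    unfold nfD
    rw [Finset.mul_sum]
    refine Finset.sum_congr rfl fun i _ => ?_
    rw [Finset.mul_sum]
    refine Finset.sum_congr rfl fun j _ => ?_
    rw [mul_ite, mul_zero, Algebra.TensorProduct.tmul_mul_tmul, one_mul, ← pow_add]
  set h : ℕ → TruncPoly k n ⊗[k] TruncPoly k n :=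
    fun i' => if c + l ≤ n + i' then (nfX k n ^ i') ⊗ₜ[k] (nfX k n ^ (c + l - i')) else 0 with hh
  have h0 : ∀ i, n < i → h i = 0 := by
    intro i hi
    simp only [hh]
    split
    · rw [nfX_pow_zero k n hi, TensorProduct.zero_tmul]
    · rfl
  have h1 : ∀ i < l, h i = 0 := by
    intro i hi
    simp only [hh]
    rw [if_neg (by omega)]
  have lhs2 : ((nfX k n ^ l) ⊗ₜ[k] (1 : TruncPoly k n)) * nfD k n c
      = ∑ i ∈ Finset.range (n+1), h (l + i) := by
    rw [lhs_eq]
    refine Finset.sum_congr rfl fun i hi => ?_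
    rw [Finset.mem_range] at hi
    rw [sum_ite_collapse (fun j => (nfX k n ^ (l+i)) ⊗ₜ[k] (nfX k n ^ j)) i c (by omega)]
    simp only [hh]
    by_cases hcc : c ≤ n + i
    · rw [if_pos hcc, if_pos (by omega)]
      congr 2
      omega
    · rw [if_neg hcc, if_neg (by omega)]
  have rhs2 : nfD k n (c + l) = ∑ i ∈ Finset.range (n+1), h i := by
    unfold nfD
    refine Finset.sum_congr rfl fun i hi => ?_
    rw [Finset.mem_range] at hi
    rw [sum_ite_collapse (fun j => (nfX k n ^ i) ⊗ₜ[k] (nfX k n ^ j)) i (c+l) (by omega)]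
  rw [lhs2, rhs2, shift_sum h l h0 h1]

lemma nfD_rmul (c l : ℕ) (hc : n ≤ c) :
    ((1 : TruncPoly k n) ⊗ₜ[k] (nfX k n ^ l)) * nfD k n c = nfD k n (c + l) := by
  classical
  have lhs_eq : ((1 : TruncPoly k n) ⊗ₜ[k] (nfX k n ^ l)) * nfD k n c
      = ∑ j ∈ Finset.range (n+1), ∑ i ∈ Finset.range (n+1),
          (if j + i = c then (nfX k n ^ i) ⊗ₜ[k] (nfX k n ^ (l+j)) else 0) := by
    unfold nfD
    rw [Finset.mul_sum, Finset.sum_comm]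
    refine Finset.sum_congr rfl fun j _ => ?_
    rw [Finset.mul_sum]
    refine Finset.sum_congr rfl fun i _ => ?_
    rw [mul_ite, mul_zero, Algebra.TensorProduct.tmul_mul_tmul, one_mul, ← pow_add]
    exact if_congr (by omega) rfl rfl
  set h : ℕ → TruncPoly k n ⊗[k] TruncPoly k n :=
    fun j' => if c + l ≤ n + j' then (nfX k n ^ (c + l - j')) ⊗ₜ[k] (nfX k n ^ j') else 0 with hh
  have h0 : ∀ j, n < j → h j = 0 := by
    intro j hj
    simp only [hh]
    split
    · rw [nfX_pow_zero k n hj, TensorProduct.tmul_zero]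
    · rfl
  have h1 : ∀ j < l, h j = 0 := by
    intro j hj
    simp only [hh]
    rw [if_neg (by omega)]
  have lhs2 : ((1 : TruncPoly k n) ⊗ₜ[k] (nfX k n ^ l)) * nfD k n c
      = ∑ j ∈ Finset.range (n+1), h (l + j) := by
    rw [lhs_eq]
    refine Finset.sum_congr rfl fun j hj => ?_
    rw [Finset.mem_range] at hj
    rw [sum_ite_collapse (fun i => (nfX k n ^ i) ⊗ₜ[k] (nfX k n ^ (l+j))) j c (by omega)]
    simp only [hh]
    by_cases hcc : c ≤ n + j
    · rw [if_pos hcc, if_pos (by omega)]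
      congr 2
      omega
    · rw [if_neg hcc, if_neg (by omega)]
  have rhs2 : nfD k n (c + l) = ∑ j ∈ Finset.range (n+1), h j := by
    unfold nfD
    rw [Finset.sum_comm]
    refine Finset.sum_congr rfl fun j hj => ?_
    rw [Finset.mem_range] at hj
    have : ∀ i ∈ Finset.range (n+1), (if i + j = c + l then ((nfX k n) ^ i) ⊗ₜ[k] ((nfX k n) ^ j) else 0)
        = (if j + i = c + l then ((nfX k n) ^ i) ⊗ₜ[k] ((nfX k n) ^ j) else 0) :=
      fun i _ => if_congr (by omega) rfl rfl
    rw [Finset.sum_congr rfl this,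
      sum_ite_collapse (fun i => (nfX k n ^ i) ⊗ₜ[k] (nfX k n ^ j)) j (c+l) (by omega)]
  rw [lhs2, rhs2, shift_sum h l h0 h1]

/-- The coproduct. -/
noncomputable def nfDelta : TruncPoly k n →ₗ[k] TruncPoly k n ⊗[k] TruncPoly k n :=
  (LinearMap.mulRight k (nfD k n (n+m))).comp
    (Algebra.TensorProduct.includeLeft (R := k) (S := k) (A := TruncPoly k n)
      (B := TruncPoly k n)).toLinearMap

lemma nfDelta_apply (a : TruncPoly k n) :
    nfDelta k n m a = (a ⊗ₜ[k] (1 : TruncPoly k n)) * nfD k n (n+m) := rfl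

lemma nfDelta_pow (l : ℕ) : nfDelta k n m (nfX k n ^ l) = nfD k n (n+m+l) := by
  rw [nfDelta_apply, nfD_lmul k n (n+m) l (by omega)]

lemma nfDelta_mul (a b : TruncPoly k n) :
    nfDelta k n m (a * b) = (a ⊗ₜ[k] (1 : TruncPoly k n)) * nfDelta k n m b := by
  rw [nfDelta_apply, nfDelta_apply, ← mul_assoc, Algebra.TensorProduct.tmul_mul_tmul, one_mul]

lemma nfComm_pow (l : ℕ) :
    ((nfX k n ^ l) ⊗ₜ[k] (1 : TruncPoly k n)) * nfD k n (n+m)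
      = ((1 : TruncPoly k n) ⊗ₜ[k] (nfX k n ^ l)) * nfD k n (n+m) := by
  rw [nfD_lmul k n (n+m) l (by omega), nfD_rmul k n (n+m) l (by omega)]

lemma nfComm_all (b : TruncPoly k n) :
    (b ⊗ₜ[k] (1 : TruncPoly k n)) * nfD k n (n+m)
      = ((1 : TruncPoly k n) ⊗ₜ[k] b) * nfD k n (n+m) := by
  induction b using AdjoinRoot.induction_on with
  | ih p =>
    rw [← AdjoinRoot.aeval_eq]
    rw [Polynomial.aeval_eq_sum_range (R := k)]
    rw [TensorProduct.sum_tmul, TensorProduct.tmul_sum, Finset.sum_mul, Finset.sum_mul]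
    refine Finset.sum_congr rfl fun i _ => ?_
    rw [← TensorProduct.smul_tmul', TensorProduct.tmul_smul, smul_mul_assoc, smul_mul_assoc]
    congr 1
    exact nfComm_pow k n m i

lemma nfBimod (a x b : TruncPoly k n) :
    nfDelta k n m (a * x * b)
      = (a ⊗ₜ[k] (1 : TruncPoly k n)) * nfDelta k n m x * ((1 : TruncPoly k n) ⊗ₜ[k] b) := by
  have h : (a * x * b) ⊗ₜ[k] (1 : TruncPoly k n)
      = (a ⊗ₜ[k] (1 : TruncPoly k n)) * (x ⊗ₜ[k] (1 : TruncPoly k n))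
        * (b ⊗ₜ[k] (1 : TruncPoly k n)) := by
    rw [Algebra.TensorProduct.tmul_mul_tmul, Algebra.TensorProduct.tmul_mul_tmul, mul_one, mul_one]
  rw [nfDelta_apply, nfDelta_apply, h]
  linear_combination ((a ⊗ₜ[k] (1 : TruncPoly k n)) * (x ⊗ₜ[k] (1 : TruncPoly k n)))
    * nfComm_all k n m b

lemma nfH1 (a : TruncPoly k n) (w : TruncPoly k n ⊗[k] TruncPoly k n) :
    LinearMap.rTensor (TruncPoly k n) (nfDelta k n m) ((a ⊗ₜ[k] (1 : TruncPoly k n)) * w)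
      = ((a ⊗ₜ[k] (1 : TruncPoly k n)) ⊗ₜ[k] (1 : TruncPoly k n))
          * LinearMap.rTensor (TruncPoly k n) (nfDelta k n m) w := by
  induction w using TensorProduct.induction_on with
  | zero => simp
  | tmul u v =>
    rw [Algebra.TensorProduct.tmul_mul_tmul, one_mul, LinearMap.rTensor_tmul,
      LinearMap.rTensor_tmul, Algebra.TensorProduct.tmul_mul_tmul, one_mul, nfDelta_mul]
  | add u v hu hv =>
    rw [mul_add, map_add, map_add, hu, hv, mul_add]

lemma nfH2 (a : TruncPoly k n) (w : TruncPoly k n ⊗[k] TruncPoly k n) :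
    LinearMap.lTensor (TruncPoly k n) (nfDelta k n m) ((a ⊗ₜ[k] (1 : TruncPoly k n)) * w)
      = (a ⊗ₜ[k] (1 : TruncPoly k n ⊗[k] TruncPoly k n))
          * LinearMap.lTensor (TruncPoly k n) (nfDelta k n m) w := by
  induction w using TensorProduct.induction_on with
  | zero => simp
  | tmul u v =>
    rw [Algebra.TensorProduct.tmul_mul_tmul, one_mul, LinearMap.lTensor_tmul,
      LinearMap.lTensor_tmul, Algebra.TensorProduct.tmul_mul_tmul, one_mul]
  | add u v hu hv =>
    rw [mul_add, map_add, map_add, hu, hv, mul_add]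

lemma nfH3 (a : TruncPoly k n)
    (z : (TruncPoly k n ⊗[k] TruncPoly k n) ⊗[k] TruncPoly k n) :
    TensorProduct.assoc k (TruncPoly k n) (TruncPoly k n) (TruncPoly k n)
        (((a ⊗ₜ[k] (1 : TruncPoly k n)) ⊗ₜ[k] (1 : TruncPoly k n)) * z)
      = (a ⊗ₜ[k] ((1 : TruncPoly k n) ⊗ₜ[k] (1 : TruncPoly k n)))
          * TensorProduct.assoc k (TruncPoly k n) (TruncPoly k n) (TruncPoly k n) z := by
  induction z using TensorProduct.induction_on with
  | zero => simp
  | tmul y w =>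
    induction y using TensorProduct.induction_on with
    | zero => simp
    | tmul u v =>
      rw [Algebra.TensorProduct.tmul_mul_tmul, Algebra.TensorProduct.tmul_mul_tmul, one_mul,
        one_mul, TensorProduct.assoc_tmul, TensorProduct.assoc_tmul,
        Algebra.TensorProduct.tmul_mul_tmul, Algebra.TensorProduct.tmul_mul_tmul, one_mul, one_mul]
    | add y1 y2 h1 h2 =>
      rw [TensorProduct.add_tmul, mul_add, map_add, h1, h2, map_add, mul_add]
  | add z1 z2 h1 h2 =>
    rw [mul_add, map_add, map_add, h1, h2, mul_add]

lemma nfD_tmul_expand (c : ℕ) (z : TruncPoly k n) :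
    TensorProduct.assoc k (TruncPoly k n) (TruncPoly k n) (TruncPoly k n)
        ((nfD k n c) ⊗ₜ[k] z)
      = ∑ p ∈ Finset.range (n+1), ∑ q ∈ Finset.range (n+1),
          if p + q = c then (nfX k n ^ p) ⊗ₜ[k] ((nfX k n ^ q) ⊗ₜ[k] z) else 0 := by
  unfold nfD
  rw [TensorProduct.sum_tmul, map_sum]
  refine Finset.sum_congr rfl fun p _ => ?_
  rw [TensorProduct.sum_tmul, map_sum]
  refine Finset.sum_congr rfl fun q _ => ?_
  rw [TensorProduct.ite_tmul, apply_ite (TensorProduct.assoc k (TruncPoly k n) (TruncPoly k n)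
    (TruncPoly k n)), map_zero, TensorProduct.assoc_tmul]

lemma tmul_nfD_expand (c : ℕ) (z : TruncPoly k n) :
    z ⊗ₜ[k] (nfD k n c)
      = ∑ p ∈ Finset.range (n+1), ∑ q ∈ Finset.range (n+1),
          if p + q = c then z ⊗ₜ[k] ((nfX k n ^ p) ⊗ₜ[k] (nfX k n ^ q)) else 0 := by
  unfold nfD
  rw [TensorProduct.tmul_sum]
  refine Finset.sum_congr rfl fun p _ => ?_
  rw [TensorProduct.tmul_sum]
  refine Finset.sum_congr rfl fun q _ => ?_
  rw [TensorProduct.tmul_ite]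

lemma nfCoassocE :
    TensorProduct.assoc k (TruncPoly k n) (TruncPoly k n) (TruncPoly k n)
        (LinearMap.rTensor (TruncPoly k n) (nfDelta k n m) (nfD k n (n+m)))
      = LinearMap.lTensor (TruncPoly k n) (nfDelta k n m) (nfD k n (n+m)) := by
  classical
  -- the common value
  set G : TruncPoly k n ⊗[k] (TruncPoly k n ⊗[k] TruncPoly k n) :=
    ∑ r ∈ Finset.range (n+1), ∑ s ∈ Finset.range (n+1), ∑ t ∈ Finset.range (n+1),
      if r + s + t = n + m + (n + m) then
        (nfX k n ^ r) ⊗ₜ[k] ((nfX k n ^ s) ⊗ₜ[k] (nfX k n ^ t)) else 0 with hG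
  have lhs_eq : TensorProduct.assoc k (TruncPoly k n) (TruncPoly k n) (TruncPoly k n)
        (LinearMap.rTensor (TruncPoly k n) (nfDelta k n m) (nfD k n (n+m))) = G := by
    have step1 : LinearMap.rTensor (TruncPoly k n) (nfDelta k n m) (nfD k n (n+m))
        = ∑ i ∈ Finset.range (n+1), ∑ j ∈ Finset.range (n+1),
            if i + j = n + m then (nfD k n (n+m+i)) ⊗ₜ[k] (nfX k n ^ j) else 0 := by
      conv_lhs => rw [nfD]
      rw [map_sum]
      refine Finset.sum_congr rfl fun i _ => ?_
      rw [map_sum]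
      refine Finset.sum_congr rfl fun j _ => ?_
      rw [apply_ite (LinearMap.rTensor (TruncPoly k n) (nfDelta k n m)), map_zero,
        LinearMap.rTensor_tmul]
      exact if_congr Iff.rfl (by rw [nfDelta_pow]) rfl
    rw [step1, Finset.sum_comm, map_sum, hG]
    -- push assoc inside and collapse the i-sum
    have step2 : ∀ j ∈ Finset.range (n+1),
        (TensorProduct.assoc k (TruncPoly k n) (TruncPoly k n) (TruncPoly k n))
            (∑ i ∈ Finset.range (n+1),
              if i + j = n + m then (nfD k n (n+m+i)) ⊗ₜ[k] (nfX k n ^ j) else 0)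
          = ∑ r ∈ Finset.range (n+1), ∑ s ∈ Finset.range (n+1),
              if r + s + j = n + m + (n + m) then
                (nfX k n ^ r) ⊗ₜ[k] ((nfX k n ^ s) ⊗ₜ[k] (nfX k n ^ j)) else 0 := by
      intro j hj
      rw [Finset.mem_range] at hj
      rw [map_sum]
      have e1 : ∀ i ∈ Finset.range (n+1),
          (TensorProduct.assoc k (TruncPoly k n) (TruncPoly k n) (TruncPoly k n))
              (if i + j = n + m then (nfD k n (n+m+i)) ⊗ₜ[k] (nfX k n ^ j) else 0)
            = if j + i = n + m then
                (TensorProduct.assoc k (TruncPoly k n) (TruncPoly k n) (TruncPoly k n))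
                  ((nfD k n (n+m+i)) ⊗ₜ[k] (nfX k n ^ j)) else 0 := by
        intro i _
        rw [apply_ite (TensorProduct.assoc k (TruncPoly k n) (TruncPoly k n) (TruncPoly k n)),
          map_zero]
        exact if_congr (by omega) rfl rfl
      rw [Finset.sum_congr rfl e1,
        sum_ite_collapse (fun i => (TensorProduct.assoc k (TruncPoly k n) (TruncPoly k n)
          (TruncPoly k n)) ((nfD k n (n+m+i)) ⊗ₜ[k] (nfX k n ^ j))) j (n+m) (by omega)]
      by_cases hmj : m ≤ j
      · rw [if_pos (by omega), nfD_tmul_expand]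
        refine Finset.sum_congr rfl fun r _ => Finset.sum_congr rfl fun s _ => ?_
        exact if_congr (by omega) rfl rfl
      · rw [if_neg (by omega)]
        symm
        refine Finset.sum_eq_zero fun r hr => Finset.sum_eq_zero fun s hs => ?_
        rw [Finset.mem_range] at hr hs
        rw [if_neg (by omega)]
    -- reorder the sums of G
    rw [Finset.sum_congr rfl step2]
    rw [Finset.sum_comm]
    refine Finset.sum_congr rfl fun r _ => ?_
    rw [Finset.sum_comm]
  have rhs_eq : LinearMap.lTensor (TruncPoly k n) (nfDelta k n m) (nfD k n (n+m)) = G := by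
    conv_lhs => rw [nfD]
    rw [map_sum, hG]
    refine Finset.sum_congr rfl fun i hi => ?_
    rw [Finset.mem_range] at hi
    rw [map_sum]
    have e1 : ∀ j ∈ Finset.range (n+1),
        (LinearMap.lTensor (TruncPoly k n) (nfDelta k n m))
            (if i + j = n + m then ((nfX k n ^ i) ⊗ₜ[k] (nfX k n ^ j)) else 0)
          = if i + j = n + m then (nfX k n ^ i) ⊗ₜ[k] (nfD k n (n+m+j)) else 0 := by
      intro j _
      rw [apply_ite (LinearMap.lTensor (TruncPoly k n) (nfDelta k n m)), map_zero,
        LinearMap.lTensor_tmul]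
      exact if_congr Iff.rfl (by rw [nfDelta_pow]) rfl
    rw [Finset.sum_congr rfl e1,
      sum_ite_collapse (fun j => (nfX k n ^ i) ⊗ₜ[k] (nfD k n (n+m+j))) i (n+m) (by omega)]
    by_cases hmi : m ≤ i
    · rw [if_pos (by omega), tmul_nfD_expand]
      refine Finset.sum_congr rfl fun s _ => Finset.sum_congr rfl fun t _ => ?_
      exact if_congr (by omega) rfl rfl
    · rw [if_neg (by omega)]
      symm
      refine Finset.sum_eq_zero fun s hs => Finset.sum_eq_zero fun t ht => ?_
      rw [Finset.mem_range] at hs ht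
      rw [if_neg (by omega)]
  rw [lhs_eq, rhs_eq]

end


/-- For `A = k[x]/(x^(n+1))` and `0 ≤ m ≤ n`, the linear map given on the
basis by `Δ_m(x^l) = Σ_{i+j=n+m+l, 0 ≤ i,j ≤ n} x^i ⊗ x^j` is a coassociative
`A`-bimodule map, i.e. a nearly Frobenius coproduct. -/
theorem truncPoly_deltaM_nearlyFrobenius (k : Type*) [Field k] (n m : ℕ) (hm : m ≤ n) :
    ∃ Δ : TruncPoly k n →ₗ[k] TruncPoly k n ⊗[k] TruncPoly k n,
      (∀ l ≤ n,
        Δ ((AdjoinRoot.root ((Polynomial.X : Polynomial k) ^ (n + 1))) ^ l) =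
          ∑ i ∈ Finset.range (n + 1), ∑ j ∈ Finset.range (n + 1),
            if i + j = n + m + l then
              ((AdjoinRoot.root ((Polynomial.X : Polynomial k) ^ (n + 1))) ^ i) ⊗ₜ[k]
                ((AdjoinRoot.root ((Polynomial.X : Polynomial k) ^ (n + 1))) ^ j)
            else 0) ∧
      (∀ a x b : TruncPoly k n,
        Δ (a * x * b) =
          (a ⊗ₜ[k] (1 : TruncPoly k n)) * Δ x * ((1 : TruncPoly k n) ⊗ₜ[k] b)) ∧
      (∀ x : TruncPoly k n,
        (TensorProduct.assoc k (TruncPoly k n) (TruncPoly k n) (TruncPoly k n))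
            (LinearMap.rTensor (TruncPoly k n) Δ (Δ x)) =
          LinearMap.lTensor (TruncPoly k n) Δ (Δ x)) := by
  refine ⟨nfDelta k n m, ?_, ?_, ?_⟩
  · intro l _
    have hroot : (AdjoinRoot.root ((Polynomial.X : Polynomial k) ^ (n + 1))) = nfX k n := rfl
    rw [hroot, nfDelta_pow, nfD]
  · exact nfBimod k n m
  · intro x
    calc (TensorProduct.assoc k (TruncPoly k n) (TruncPoly k n) (TruncPoly k n))
          (LinearMap.rTensor (TruncPoly k n) (nfDelta k n m) (nfDelta k n m x))
        = (TensorProduct.assoc k (TruncPoly k n) (TruncPoly k n) (TruncPoly k n))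
            (LinearMap.rTensor (TruncPoly k n) (nfDelta k n m)
              ((x ⊗ₜ[k] (1 : TruncPoly k n)) * nfD k n (n+m))) := by rw [nfDelta_apply]
      _ = (TensorProduct.assoc k (TruncPoly k n) (TruncPoly k n) (TruncPoly k n))
            (((x ⊗ₜ[k] (1 : TruncPoly k n)) ⊗ₜ[k] (1 : TruncPoly k n))
              * LinearMap.rTensor (TruncPoly k n) (nfDelta k n m) (nfD k n (n+m))) := by
          rw [nfH1]
      _ = (x ⊗ₜ[k] ((1 : TruncPoly k n) ⊗ₜ[k] (1 : TruncPoly k n)))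
            * (TensorProduct.assoc k (TruncPoly k n) (TruncPoly k n) (TruncPoly k n))
              (LinearMap.rTensor (TruncPoly k n) (nfDelta k n m) (nfD k n (n+m))) := by
          rw [nfH3]
      _ = (x ⊗ₜ[k] ((1 : TruncPoly k n) ⊗ₜ[k] (1 : TruncPoly k n)))
            * LinearMap.lTensor (TruncPoly k n) (nfDelta k n m) (nfD k n (n+m)) := by
          rw [nfCoassocE]
      _ = (x ⊗ₜ[k] (1 : TruncPoly k n ⊗[k] TruncPoly k n))
            * LinearMap.lTensor (TruncPoly k n) (nfDelta k n m) (nfD k n (n+m)) := by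
          rw [Algebra.TensorProduct.one_def]
      _ = LinearMap.lTensor (TruncPoly k n) (nfDelta k n m)
            ((x ⊗ₜ[k] (1 : TruncPoly k n)) * nfD k n (n+m)) := (nfH2 k n m x _).symm
      _ = LinearMap.lTensor (TruncPoly k n) (nfDelta k n m) (nfDelta k n m x) := by
          rw [nfDelta_apply]
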